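/- arXiv:1608.04168 — 2 statements merged into one kernel-verified Lean document; each statement's English description precedes it below -/
import Mathlib

section
/- For any real m×n matrix M with compact singular value decomposition M = U Σ Vᵀ (Σ positive definite diagonal of size r = rank M, U, V with orthonormal columns), the symmetric block matrix Y = [[U Σ Uᵀ, M], [Mᵀ, V Σ Vᵀ]] is positive semidefinite, has rank equal to rank M, and satisfies trace(Y) = 2‖M‖_*. -/
open Matrix

/-- The nuclear norm of a real matrix: the sum of its singular values,
computed as the trace of the positive semidefinite square root of `Mᵀ * M`. -/
noncomputable def nuclearNorm {m n : ℕ} (M : Matrix (Fin m) (Fin n) ℝ) : ℝ :=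
  ((Matrix.posSemidef_conjTranspose_mul_self M).1.eigenvectorUnitary.1 *
    diagonal ((RCLike.ofReal : ℝ → ℝ) ∘ (√·) ∘ (Matrix.posSemidef_conjTranspose_mul_self M).1.eigenvalues) *
    (star (Matrix.posSemidef_conjTranspose_mul_self M).1.eigenvectorUnitary : Matrix (Fin n) (Fin n) ℝ)).trace

/-!
With `W = [U; V]` the block matrix factors as `Y = W S Wᵀ`, and `Wᵀ W = UᵀU + VᵀV = 2`.
Hence `Y` is positive semidefinite by congruence, and `Wᵀ Y W = 4 S` is invertible, so
`rank Y = r`. Each diagonal block has trace `tr S`, and the lower one, `V S Vᵀ`, is the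
positive semidefinite square root of `Mᵀ M`, whose trace is `‖M‖_*`.
-/

namespace Matrix

variable {ι κ R : Type*} [Fintype ι] [Fintype κ]

theorem trace_fromBlocks [AddCommMonoid R] (A : Matrix ι ι R) (B : Matrix ι κ R)
    (C : Matrix κ ι R) (D : Matrix κ κ R) :
    (fromBlocks A B C D).trace = A.trace + D.trace := by
  simp [trace, Fintype.sum_sum_type]

theorem trace_mul_mul_of_mul_eq_one [CommSemiring R] [DecidableEq κ]
    {A : Matrix ι κ R} {B : Matrix κ ι R} (hBA : B * A = 1) (S : Matrix κ κ R) :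
    (A * S * B).trace = S.trace := by
  rw [trace_mul_comm, ← Matrix.mul_assoc, hBA, Matrix.one_mul]

theorem fromRows_mul_mul_transpose_fromRows [Semiring R] {m n : Type*}
    (U : Matrix m κ R) (V : Matrix n κ R) (S : Matrix κ κ R) :
    fromRows U V * S * (fromRows U V)ᵀ =
      fromBlocks (U * S * Uᵀ) (U * S * Vᵀ) (V * S * Uᵀ) (V * S * Vᵀ) := by
  rw [transpose_fromRows, fromRows_mul, fromRows_mul_fromCols]

theorem rank_mul_mul_of_isUnit [CommSemiring R] [StrongRankCondition R] [DecidableEq κ]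
    {A : Matrix ι κ R} {B : Matrix κ ι R} (hBA : IsUnit (B * A)) {S : Matrix κ κ R}
    (hS : IsUnit S) : (A * S * B).rank = Fintype.card κ := by
  refine le_antisymm ?_ ?_
  · calc (A * S * B).rank ≤ (A * S).rank := rank_mul_le_left _ _
      _ ≤ S.rank := rank_mul_le_right _ _
      _ = Fintype.card κ := rank_of_isUnit S hS
  · have hsandwich : B * (A * S * B) * A = (B * A) * S * (B * A) := by
      simp only [Matrix.mul_assoc]
    calc Fintype.card κ = (B * (A * S * B) * A).rank := by
          rw [hsandwich, rank_of_isUnit _ ((hBA.mul hS).mul hBA)]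
      _ ≤ (B * (A * S * B)).rank := rank_mul_le_left _ _
      _ ≤ (A * S * B).rank := rank_mul_le_right _ _

end Matrix

open scoped MatrixOrder in
theorem nuclearNorm_eq_trace_of_mul_self_eq {m n : ℕ} (M : Matrix (Fin m) (Fin n) ℝ)
    {B : Matrix (Fin n) (Fin n) ℝ} (hB : B.PosSemidef) (hBB : B * B = Mᵀ * M) :
    nuclearNorm M = B.trace := by
  have hMM := posSemidef_conjTranspose_mul_self M
  have hsqrt : CFC.sqrt (Mᴴ * M) = B := by
    rw [CFC.sqrt_eq_iff _ _ hMM.nonneg hB.nonneg, conjTranspose_eq_transpose_of_trivial, hBB]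
  rw [nuclearNorm, ← hsqrt, CFC.sqrt_eq_real_sqrt _ hMM.nonneg, cfcₙ_eq_cfc, hMM.1.cfc_eq]
  rfl

theorem blockMatrix_from_compact_svd_general (m n r : ℕ) (M : Matrix (Fin m) (Fin n) ℝ)
    (U : Matrix (Fin m) (Fin r) ℝ) (V : Matrix (Fin n) (Fin r) ℝ)
    (S : Matrix (Fin r) (Fin r) ℝ)
    (hr : r = M.rank) (hS : S.PosDef)
    (hU : Uᵀ * U = 1) (hV : Vᵀ * V = 1) (hM : M = U * S * Vᵀ) :
    (fromBlocks (U * S * Uᵀ) M Mᵀ (V * S * Vᵀ)).PosSemidef ∧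
    (fromBlocks (U * S * Uᵀ) M Mᵀ (V * S * Vᵀ)).rank = M.rank ∧
    (fromBlocks (U * S * Uᵀ) M Mᵀ (V * S * Vᵀ)).trace = 2 * nuclearNorm M := by
  have hSt : Sᵀ = S := hS.1
  have hMt : Mᵀ = V * S * Uᵀ := by simp [hM, transpose_mul, hSt, Matrix.mul_assoc]
  have hY :
      fromBlocks (U * S * Uᵀ) M Mᵀ (V * S * Vᵀ) = fromRows U V * S * (fromRows U V)ᵀ := by
    rw [fromRows_mul_mul_transpose_fromRows, hMt, hM]
  have hWW : (fromRows U V)ᵀ * fromRows U V = (2 : ℝ) • 1 := by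
    rw [transpose_fromRows, fromCols_mul_fromRows, hU, hV, two_smul]
  have hsq : V * S * Vᵀ * (V * S * Vᵀ) = Mᵀ * M := by
    rw [hMt, hM]
    simp only [Matrix.mul_assoc, ← Matrix.mul_assoc Vᵀ, ← Matrix.mul_assoc Uᵀ, hU, hV,
      Matrix.one_mul]
  refine ⟨hY ▸ by simpa using hS.posSemidef.mul_mul_conjTranspose_same (fromRows U V), ?_, ?_⟩
  · have hWW_unit : IsUnit ((fromRows U V)ᵀ * fromRows U V) :=
      hWW ▸ isUnit_one.smul (Units.mk0 (2 : ℝ) two_ne_zero)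
    rw [hY, rank_mul_mul_of_isUnit hWW_unit hS.isUnit, Fintype.card_fin, hr]
  · have hVSV : (V * S * Vᵀ).PosSemidef := by
      simpa [Matrix.mul_assoc] using hS.posSemidef.mul_mul_conjTranspose_same V
    rw [trace_fromBlocks, nuclearNorm_eq_trace_of_mul_self_eq M hVSV hsq,
      trace_mul_mul_of_mul_eq_one hU, trace_mul_mul_of_mul_eq_one hV]
    ring

theorem blockMatrix_from_compact_svd (m n r : ℕ) (M : Matrix (Fin m) (Fin n) ℝ)
    (U : Matrix (Fin m) (Fin r) ℝ) (V : Matrix (Fin n) (Fin r) ℝ)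
    (S : Matrix (Fin r) (Fin r) ℝ)
    (hr : r = M.rank) (hS : S.PosDef) (hSdiag : S.IsDiag)
    (hU : Uᵀ * U = 1) (hV : Vᵀ * V = 1) (hM : M = U * S * Vᵀ) :
    (fromBlocks (U * S * Uᵀ) M Mᵀ (V * S * Vᵀ)).PosSemidef ∧
    (fromBlocks (U * S * Uᵀ) M Mᵀ (V * S * Vᵀ)).rank = M.rank ∧
    (fromBlocks (U * S * Uᵀ) M Mᵀ (V * S * Vᵀ)).trace = 2 * nuclearNorm M :=
  blockMatrix_from_compact_svd_general m n r M U V S hr hS hU hV hM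
end

section
/- Let X = P̄ Q̄ᵀ be a full rank factorization of a p×q matrix X of rank r, and let Ū ∈ ℝ^{p×(p−r)} have columns spanning the orthogonal complement of Range(P̄) (so P̄ᵀŪ = 0 and P̄P̄ᵀ + ŪŪᵀ ≻ 0). If Y ⪰ 0 has the block form of equation (3.2) with X = P D Qᵀ and Range(P) = Range(P̄), then the matrix obtained by placing ŪŪᵀ in the diagonal block corresponding to the rows of X and zeros elsewhere is an exposing vector for Y, i.e., it is positive semidefinite and its product with Y is zero. -/
/-!
Since `Range P̄ = Range P` and `P̄ᵀ Ū = 0`, also `Ūᵀ P = 0`. The exposing matrix is `M Mᵀ` with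
`M = [0; Ū; 0; 0]`, so it is positive semidefinite, and `Mᵀ [U; P; Q; V] = Ūᵀ P = 0` kills `Y`.
-/

open Matrix

variable {R : Type*} {l m n k : Type*}

theorem Matrix.mul_eq_zero_of_range_le [CommRing R] [Fintype n] [Fintype k] [Fintype l]
    {A : Matrix m n R} {B : Matrix n k R} {C : Matrix n l R}
    (hAB : A * B = 0) (hCB : LinearMap.range C.mulVecLin ≤ LinearMap.range B.mulVecLin) :
    A * C = 0 := by
  have hB : LinearMap.range B.mulVecLin ≤ LinearMap.ker A.mulVecLin := by
    rw [LinearMap.range_le_ker_iff, ← Matrix.mulVecLin_mul, hAB, Matrix.mulVecLin_zero]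
  classical
  apply Matrix.toLin'.injective
  rw [Matrix.toLin'_mul, map_zero, ← LinearMap.range_le_ker_iff]
  exact hCB.trans hB

theorem Matrix.fromBlocks_zero_mul_transpose [CommRing R] [Fintype k] (A : Matrix n k R) :
    fromBlocks (0 : Matrix m m R) 0 0 (A * Aᵀ) = fromRows 0 A * (fromRows 0 A)ᵀ := by
  rw [transpose_fromRows, fromRows_mul_fromCols]
  simp

theorem Matrix.fromBlocks_mul_transpose_zero [CommRing R] [Fintype k] (A : Matrix n k R) :
    fromBlocks (A * Aᵀ) 0 0 (0 : Matrix m m R) = fromRows A 0 * (fromRows A 0)ᵀ := by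
  rw [transpose_fromRows, fromRows_mul_fromCols]
  simp

theorem Matrix.mul_transpose_mul_eq_zero [CommRing R] [Fintype m] [Fintype n] [Fintype k]
    {M : Matrix m k R} {S : Matrix m n R} (hMS : Mᵀ * S = 0) (D : Matrix n n R) :
    M * Mᵀ * (S * D * Sᵀ) = 0 := by
  rw [Matrix.mul_assoc, ← Matrix.mul_assoc Mᵀ, ← Matrix.mul_assoc Mᵀ, hMS]
  simp

theorem clique_exposing_vector_general (a p q b r : ℕ)
    (U : Matrix (Fin a) (Fin r) ℝ) (P : Matrix (Fin p) (Fin r) ℝ)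
    (Q : Matrix (Fin q) (Fin r) ℝ) (V : Matrix (Fin b) (Fin r) ℝ)
    (D : Matrix (Fin r) (Fin r) ℝ)
    (Pbar : Matrix (Fin p) (Fin r) ℝ)
    (hPbar : LinearMap.range Pbar.mulVecLin = LinearMap.range P.mulVecLin)
    (Ubar : Matrix (Fin p) (Fin (p - r)) ℝ)
    (hperp : Pbarᵀ * Ubar = 0) :
    (fromBlocks (0 : Matrix (Fin a) (Fin a) ℝ) 0 0
        (fromBlocks (Ubar * Ubarᵀ) 0 0 (0 : Matrix (Fin q ⊕ Fin b) (Fin q ⊕ Fin b) ℝ))).PosSemidef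
    ∧
    (fromBlocks (0 : Matrix (Fin a) (Fin a) ℝ) 0 0
        (fromBlocks (Ubar * Ubarᵀ) 0 0 (0 : Matrix (Fin q ⊕ Fin b) (Fin q ⊕ Fin b) ℝ))) *
      (fromRows U (fromRows P (fromRows Q V)) * D *
        (fromRows U (fromRows P (fromRows Q V)))ᵀ) = 0 := by
  have hUbarP : Ubarᵀ * P = 0 := by
    refine Matrix.mul_eq_zero_of_range_le (B := Pbar) ?_ hPbar.ge
    rw [← transpose_transpose Pbar, ← transpose_mul, hperp, transpose_zero]
  rw [fromBlocks_mul_transpose_zero, fromBlocks_zero_mul_transpose]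
  set M : Matrix (Fin a ⊕ (Fin p ⊕ (Fin q ⊕ Fin b))) (Fin (p - r)) ℝ :=
    fromRows 0 (fromRows Ubar 0)
  have hM_exposes : Mᵀ * fromRows U (fromRows P (fromRows Q V)) = 0 := by
    simp [M, transpose_fromRows, fromCols_mul_fromRows, hUbarP]
  exact ⟨by simpa using posSemidef_self_mul_conjTranspose M,
    mul_transpose_mul_eq_zero hM_exposes D⟩

/-- The exposing vector built from a clique: placing `Ū Ūᵀ` (where the columns of
`Ū` span the orthogonal complement of `Range P̄ = Range P`) in the diagonal block
corresponding to the rows of the specified submatrix `X = P D Qᵀ`, and zeros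
elsewhere, yields a positive semidefinite matrix `E` with `E * Y = 0`. -/
theorem clique_exposing_vector (a p q b r : ℕ)
    (U : Matrix (Fin a) (Fin r) ℝ) (P : Matrix (Fin p) (Fin r) ℝ)
    (Q : Matrix (Fin q) (Fin r) ℝ) (V : Matrix (Fin b) (Fin r) ℝ)
    (D : Matrix (Fin r) (Fin r) ℝ) (hD : D.PosDef)
    (X : Matrix (Fin p) (Fin q) ℝ) (hX : X = P * D * Qᵀ) (hXr : X.rank = r)
    (Pbar : Matrix (Fin p) (Fin r) ℝ)
    (hPbar : LinearMap.range Pbar.mulVecLin = LinearMap.range P.mulVecLin)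
    (Ubar : Matrix (Fin p) (Fin (p - r)) ℝ)
    (hperp : Pbarᵀ * Ubar = 0)
    (hpos : (Pbar * Pbarᵀ + Ubar * Ubarᵀ).PosDef) :
    (fromBlocks (0 : Matrix (Fin a) (Fin a) ℝ) 0 0
        (fromBlocks (Ubar * Ubarᵀ) 0 0 (0 : Matrix (Fin q ⊕ Fin b) (Fin q ⊕ Fin b) ℝ))).PosSemidef
    ∧
    (fromBlocks (0 : Matrix (Fin a) (Fin a) ℝ) 0 0
        (fromBlocks (Ubar * Ubarᵀ) 0 0 (0 : Matrix (Fin q ⊕ Fin b) (Fin q ⊕ Fin b) ℝ))) *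
      (fromRows U (fromRows P (fromRows Q V)) * D *
        (fromRows U (fromRows P (fromRows Q V)))ᵀ) = 0 :=
  clique_exposing_vector_general a p q b r U P Q V D Pbar hPbar Ubar hperp
end
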